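/- Let φ be a 𝒯-good function and I ∈ 𝒯 with I ≠ X. Then I ∈ S_φ if and only if for every J ∈ 𝒯 properly containing I one has Av_J(φ) < Av_I(φ), where Av_I(φ) = (1/μ(I))∫_I φ dμ. -/

import Mathlib

open MeasureTheory Set Filter
open scoped ENNReal

/-- A tree `𝒯` on a probability space `(X, μ)` in the sense of Melas:
`X ∈ 𝒯`; every `I ∈ 𝒯` is measurable with `μ(I) > 0`; each `I ∈ 𝒯` has a finite or
countable family `C(I) ⊆ 𝒯` of at least two pairwise disjoint elements with union `I`;
`𝒯` is the union of its generations `𝒯_(m)`; and `sup_{I ∈ 𝒯_(m)} μ(I) → 0`. -/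
structure DyadicTree {X : Type*} [MeasurableSpace X] (μ : Measure X) where
  mem : Set (Set X)
  univ_mem : Set.univ ∈ mem
  meas : ∀ I ∈ mem, MeasurableSet I
  measure_pos : ∀ I ∈ mem, 0 < μ I
  C : Set X → Set (Set X)
  C_subset_mem : ∀ I ∈ mem, C I ⊆ mem
  C_countable : ∀ I ∈ mem, (C I).Countable
  C_nontrivial : ∀ I ∈ mem, ∃ J ∈ C I, ∃ K ∈ C I, J ≠ K
  C_disjoint : ∀ I ∈ mem, (C I).Pairwise Disjoint
  C_union : ∀ I ∈ mem, ⋃₀ C I = I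
  gen : ℕ → Set (Set X)
  gen_zero : gen 0 = {Set.univ}
  gen_succ : ∀ m, gen (m + 1) = ⋃ I ∈ gen m, C I
  mem_eq : mem = ⋃ m, gen m
  sup_measure_tendsto : Tendsto (fun m => ⨆ I ∈ gen m, μ I) atTop (nhds 0)

variable {X : Type*} [MeasurableSpace X]

/-- The average `Av_I(φ) = (1/μ(I)) ∫_I φ dμ`. -/
noncomputable def Av (μ : Measure X) (I : Set X) (φ : X → ℝ≥0∞) : ℝ≥0∞ :=
  (∫⁻ y in I, φ y ∂μ) / μ I

/-- The dyadic-like maximal operator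
`M_𝒯 φ(x) = sup { (1/μ(I)) ∫_I φ dμ : x ∈ I ∈ 𝒯 }`. -/
noncomputable def maxOp {μ : Measure X} (T : DyadicTree μ) (φ : X → ℝ≥0∞) (x : X) : ℝ≥0∞ :=
  ⨆ I ∈ T.mem, ⨆ _ : x ∈ I, Av μ I φ

variable {μ : Measure X}

/-- The exceptional set `𝒜_φ = {x : M_𝒯φ(x) > Av_I(φ) for all I ∈ 𝒯 with x ∈ I}`. -/
def badSet (T : DyadicTree μ) (φ : X → ℝ≥0∞) : Set X :=
  {x | ∀ I ∈ T.mem, x ∈ I → Av μ I φ < maxOp T φ x}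

/-- `φ` is `𝒯`-good if the set `𝒜_φ` has `μ`-measure zero. -/
def TGood (T : DyadicTree μ) (φ : X → ℝ≥0∞) : Prop :=
  μ (badSet T φ) = 0

/-- The set `A(φ, I) = {x ∈ X ∖ 𝒜_φ : I_φ(x) = I}`, where `I_φ(x)` is the largest
`I ∈ 𝒯` with `x ∈ I` and `M_𝒯φ(x) = Av_I(φ)`. -/
def ASet (T : DyadicTree μ) (φ : X → ℝ≥0∞) (I : Set X) : Set X :=
  {x | x ∉ badSet T φ ∧ x ∈ I ∧ maxOp T φ x = Av μ I φ ∧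
    ∀ J ∈ T.mem, x ∈ J → maxOp T φ x = Av μ J φ → J ⊆ I}

/-- The subtree `S_φ = {I ∈ 𝒯 : μ(A(φ,I)) > 0} ∪ {X}`. -/
def Sphi (T : DyadicTree μ) (φ : X → ℝ≥0∞) : Set (Set X) :=
  {I ∈ T.mem | 0 < μ (ASet T φ I)} ∪ {Set.univ}


/-!
If `x ∈ A(φ, I)`, then `I` is the largest element of `𝒯` around `x` realizing `M_𝒯φ(x)`, so any
`J ⊋ I` has a strictly smaller average. Conversely, assume every `J ⊋ I` has a smaller average but
`μ(A(φ, I)) = 0`. Off the null set `𝒜_φ ∪ A(φ, I)`, each `x ∈ I` has `M_𝒯φ(x) > Av_I(φ)` attained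
on some `J ⊆ I`, so almost all of `I` is covered by the maximal `J ⊆ I` with `Av_J(φ) > Av_I(φ)`.
These are pairwise disjoint, and summing over them gives `∫_I φ > Av_I(φ) μ(I) = ∫_I φ`.
-/

namespace DyadicTree

variable (T : DyadicTree μ)

lemma gen_subset_mem (m : ℕ) : T.gen m ⊆ T.mem := by
  rw [T.mem_eq]
  exact subset_iUnion T.gen m

lemma exists_mem_gen {I : Set X} (hI : I ∈ T.mem) : ∃ m, I ∈ T.gen m := by
  rw [T.mem_eq] at hI
  exact mem_iUnion.mp hI

lemma subset_of_mem_C {I J : Set X} (hI : I ∈ T.mem) (hJ : J ∈ T.C I) : J ⊆ I := by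
  rw [← T.C_union I hI]
  exact subset_sUnion_of_mem hJ

lemma pairwiseDisjoint_gen (m : ℕ) : (T.gen m).Pairwise Disjoint := by
  induction m with
  | zero => rw [T.gen_zero]; exact pairwise_singleton _ _
  | succ n ih =>
    rw [T.gen_succ]
    intro J₁ hJ₁ J₂ hJ₂ hne
    obtain ⟨I₁, hI₁, hJI₁⟩ := mem_iUnion₂.mp hJ₁
    obtain ⟨I₂, hI₂, hJI₂⟩ := mem_iUnion₂.mp hJ₂
    by_cases hI : I₁ = I₂
    · subst hI
      exact T.C_disjoint I₁ (T.gen_subset_mem n hI₁) hJI₁ hJI₂ hne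
    · exact (ih hI₁ hI₂ hI).mono (T.subset_of_mem_C (T.gen_subset_mem n hI₁) hJI₁)
        (T.subset_of_mem_C (T.gen_subset_mem n hI₂) hJI₂)

lemma exists_gen_superset {m n : ℕ} (hmn : m ≤ n) {J : Set X} (hJ : J ∈ T.gen n) :
    ∃ I ∈ T.gen m, J ⊆ I := by
  induction n, hmn using Nat.le_induction generalizing J with
  | base => exact ⟨J, hJ, subset_rfl⟩
  | succ n _ ih =>
    rw [T.gen_succ] at hJ
    obtain ⟨K, hK, hJK⟩ := mem_iUnion₂.mp hJ
    obtain ⟨I, hI, hKI⟩ := ih hK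
    exact ⟨I, hI, (T.subset_of_mem_C (T.gen_subset_mem n hK) hJK).trans hKI⟩

lemma subset_of_mem_gen_of_le {m n : ℕ} (hmn : m ≤ n) {I J : Set X} (hI : I ∈ T.gen m)
    (hJ : J ∈ T.gen n) {x : X} (hxI : x ∈ I) (hxJ : x ∈ J) : J ⊆ I := by
  obtain ⟨I', hI', hJI'⟩ := T.exists_gen_superset hmn hJ
  obtain rfl : I = I' :=
    (T.pairwiseDisjoint_gen m).eq hI hI' (not_disjoint_iff.mpr ⟨x, hxI, hJI' hxJ⟩)
  exact hJI'

lemma subset_or_subset_of_mem {I J : Set X} (hI : I ∈ T.mem) (hJ : J ∈ T.mem) {x : X}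
    (hxI : x ∈ I) (hxJ : x ∈ J) : I ⊆ J ∨ J ⊆ I := by
  obtain ⟨m, hm⟩ := T.exists_mem_gen hI
  obtain ⟨n, hn⟩ := T.exists_mem_gen hJ
  rcases le_total m n with hmn | hnm
  · exact Or.inr (T.subset_of_mem_gen_of_le hmn hm hn hxI hxJ)
  · exact Or.inl (T.subset_of_mem_gen_of_le hnm hn hm hxJ hxI)

lemma exists_largest {Q : Set X → Prop} {x : X} (h : ∃ J ∈ T.mem, x ∈ J ∧ Q J) :
    ∃ J ∈ T.mem, x ∈ J ∧ Q J ∧ ∀ K ∈ T.mem, x ∈ K → Q K → K ⊆ J := by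
  classical
  have hgen : ∃ m, ∃ J ∈ T.gen m, x ∈ J ∧ Q J := by
    obtain ⟨J, hJ, hxJ, hQJ⟩ := h
    obtain ⟨m, hm⟩ := T.exists_mem_gen hJ
    exact ⟨m, J, hm, hxJ, hQJ⟩
  -- the candidate from the earliest generation contains all the others
  obtain ⟨J, hJ, hxJ, hQJ⟩ := Nat.find_spec hgen
  refine ⟨J, T.gen_subset_mem _ hJ, hxJ, hQJ, fun K hK hxK hQK => ?_⟩
  obtain ⟨n, hn⟩ := T.exists_mem_gen hK
  exact T.subset_of_mem_gen_of_le (Nat.find_min' hgen ⟨K, hn, hxK, hQK⟩) hJ hn hxJ hxK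

lemma countable_mem : T.mem.Countable := by
  rw [T.mem_eq]
  refine countable_iUnion fun m => ?_
  induction m with
  | zero => rw [T.gen_zero]; exact countable_singleton _
  | succ n ih =>
    rw [T.gen_succ]
    exact ih.biUnion fun I hI => T.C_countable I (T.gen_subset_mem n hI)

end DyadicTree

section Averages

variable (T : DyadicTree μ) (φ : X → ℝ≥0∞)

lemma Av_le_maxOp {I : Set X} (hI : I ∈ T.mem) {x : X} (hx : x ∈ I) :
    Av μ I φ ≤ maxOp T φ x :=
  le_iSup₂_of_le I hI (le_iSup_of_le hx le_rfl)

lemma Av_mul_measure [IsFiniteMeasure μ] {I : Set X} (hI : I ∈ T.mem) :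
    Av μ I φ * μ I = ∫⁻ y in I, φ y ∂μ :=
  ENNReal.div_mul_cancel (T.measure_pos I hI).ne' (measure_ne_top μ I)

lemma exists_Av_eq_maxOp {x : X} (hx : x ∉ badSet T φ) :
    ∃ J ∈ T.mem, x ∈ J ∧ Av μ J φ = maxOp T φ x := by
  simp only [badSet, mem_ofPred_eq, not_forall, not_lt] at hx
  obtain ⟨J, hJ, hxJ, hle⟩ := hx
  exact ⟨J, hJ, hxJ, le_antisymm (Av_le_maxOp T φ hJ hxJ) hle⟩

lemma mul_measure_sUnion_lt_setLIntegral {S : Set (Set X)} (hS : S.Countable)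
    (hd : S.Pairwise Disjoint) (hm : ∀ J ∈ S, MeasurableSet J) {J₀ : Set X} (hJ₀ : J₀ ∈ S)
    {c : ℝ≥0∞} (hc : c * μ (⋃₀ S) ≠ ∞) (h : ∀ J ∈ S, c * μ J < ∫⁻ y in J, φ y ∂μ) :
    c * μ (⋃₀ S) < ∫⁻ y in ⋃₀ S, φ y ∂μ := by
  have : Countable S := hS.to_subtype
  have hd' : Pairwise (Function.onFun Disjoint fun J : S => (J : Set X)) := fun J K hJK =>
    hd J.2 K.2 (Subtype.coe_injective.ne hJK)
  have hm' : ∀ J : S, MeasurableSet (J : Set X) := fun J => hm J J.2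
  rw [sUnion_eq_iUnion, measure_iUnion hd' hm', lintegral_iUnion hm' hd',
    ← ENNReal.tsum_mul_left] at *
  exact ENNReal.tsum_lt_tsum (i := ⟨J₀, hJ₀⟩) hc (fun J => (h J J.2).le) (h J₀ hJ₀)

end Averages

section MaximalHeavy

variable (T : DyadicTree μ) (φ : X → ℝ≥0∞) (I : Set X)

def maximalHeavy : Set (Set X) :=
  {J | Maximal (fun K => K ∈ T.mem ∧ K ⊆ I ∧ Av μ I φ < Av μ K φ) J}

variable {T φ I} in
lemma mem_maximalHeavy {J : Set X} :
    J ∈ maximalHeavy T φ I ↔ Maximal (fun K => K ∈ T.mem ∧ K ⊆ I ∧ Av μ I φ < Av μ K φ) J :=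
  Iff.rfl

lemma pairwiseDisjoint_maximalHeavy : (maximalHeavy T φ I).Pairwise Disjoint := by
  intro J₁ hJ₁ J₂ hJ₂ hne
  rw [mem_maximalHeavy] at hJ₁ hJ₂
  rw [Set.disjoint_iff]
  rintro x ⟨hx₁, hx₂⟩
  rcases T.subset_or_subset_of_mem hJ₁.prop.1 hJ₂.prop.1 hx₁ hx₂ with h | h
  · exact hne (hJ₁.eq_of_le hJ₂.prop h)
  · exact hne (hJ₂.eq_of_le hJ₁.prop h).symm

lemma measurableSet_of_mem_maximalHeavy {J : Set X} (hJ : J ∈ maximalHeavy T φ I) :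
    MeasurableSet J :=
  T.meas J (mem_maximalHeavy.mp hJ).prop.1

lemma countable_maximalHeavy : (maximalHeavy T φ I).Countable :=
  T.countable_mem.mono fun _ hJ => (mem_maximalHeavy.mp hJ).prop.1

variable {T φ I}

lemma Av_lt_of_mem_ASet {x : X} (hx : x ∈ ASet T φ I) {J : Set X} (hJ : J ∈ T.mem)
    (hIJ : I ⊂ J) : Av μ J φ < Av μ I φ := by
  obtain ⟨-, hxI, hmax, hlargest⟩ := hx
  refine (hmax ▸ Av_le_maxOp T φ hJ (hIJ.subset hxI)).lt_of_ne fun hJI => ?_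
  exact hIJ.ne (hIJ.subset.antisymm (hlargest J hJ (hIJ.subset hxI) (hmax.trans hJI.symm)))

section

variable (hAv : ∀ J ∈ T.mem, I ⊂ J → Av μ J φ < Av μ I φ)
include hAv

lemma mem_ASet_of_maxOp_eq (hI : I ∈ T.mem) {x : X} (hxI : x ∈ I) (hx : x ∉ badSet T φ)
    (hmax : maxOp T φ x = Av μ I φ) : x ∈ ASet T φ I := by
  obtain ⟨J, hJ, hxJ, hJmax, hlargest⟩ :=
    T.exists_largest (Q := fun J => Av μ J φ = maxOp T φ x) ⟨I, hI, hxI, hmax.symm⟩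
  obtain rfl : J = I := by
    by_contra hne
    have hIJ : I ⊂ J := (hlargest I hI hxI hmax.symm).ssubset_of_ne (Ne.symm hne)
    exact (hAv J hJ hIJ).ne (hJmax.trans hmax)
  exact ⟨hx, hxI, hmax, fun K hK hxK hKmax => hlargest K hK hxK hKmax.symm⟩

lemma mem_sUnion_maximalHeavy (hI : I ∈ T.mem) {x : X} (hxI : x ∈ I) (hx : x ∉ badSet T φ)
    (hmax : Av μ I φ < maxOp T φ x) : x ∈ ⋃₀ maximalHeavy T φ I := by
  obtain ⟨J, hJ, hxJ, hJmax⟩ := exists_Av_eq_maxOp T φ hx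
  have hJI : J ⊆ I := by
    refine (T.subset_or_subset_of_mem hJ hI hxJ hxI).resolve_right fun hIJ => ?_
    have hIJ' : I ⊂ J := hIJ.ssubset_of_ne (by rintro rfl; exact hmax.ne hJmax)
    exact (hAv J hJ hIJ').not_ge (hJmax ▸ hmax.le)
  obtain ⟨K, hK, hxK, ⟨hKI, hKAv⟩, hlargest⟩ :=
    T.exists_largest (Q := fun K => K ⊆ I ∧ Av μ I φ < Av μ K φ) ⟨J, hJ, hxJ, hJI, hJmax ▸ hmax⟩
  refine ⟨K, mem_maximalHeavy.mpr ⟨⟨hK, hKI, hKAv⟩, ?_⟩, hxK⟩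
  exact fun L ⟨hL, hLI, hLAv⟩ hKL => hlargest L hL (hKL hxK) ⟨hLI, hLAv⟩

lemma subset_badSet_union_ASet_union_sUnion_maximalHeavy (hI : I ∈ T.mem) :
    I ⊆ (badSet T φ ∪ ASet T φ I) ∪ ⋃₀ maximalHeavy T φ I := by
  intro x hxI
  by_cases hx : x ∈ badSet T φ
  · exact Or.inl (Or.inl hx)
  rcases (Av_le_maxOp T φ hI hxI).lt_or_eq with hlt | heq
  · exact Or.inr (mem_sUnion_maximalHeavy hAv hI hxI hx hlt)
  · exact Or.inl (Or.inr (mem_ASet_of_maxOp_eq hAv hI hxI hx heq.symm))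

lemma measure_ASet_pos [IsFiniteMeasure μ] (hgood : TGood T φ) (hI : I ∈ T.mem) :
    0 < μ (ASet T φ I) := by
  refine pos_iff_ne_zero.mpr fun hA => ?_
  set G := maximalHeavy T φ I
  have hIG : μ I ≤ μ (⋃₀ G) := by
    calc μ I ≤ μ ((badSet T φ ∪ ASet T φ I) ∪ ⋃₀ G) :=
          measure_mono (subset_badSet_union_ASet_union_sUnion_maximalHeavy hAv hI)
      _ ≤ μ (badSet T φ ∪ ASet T φ I) + μ (⋃₀ G) := measure_union_le _ _
      _ = μ (⋃₀ G) := by rw [measure_union_null hgood hA, zero_add]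
  obtain ⟨J₀, hJ₀⟩ : G.Nonempty := by
    refine nonempty_iff_ne_empty.mpr fun hG => (T.measure_pos I hI).ne' ?_
    simpa [hG] using hIG
  have hGint : ∀ J ∈ G, Av μ I φ * μ J < ∫⁻ y in J, φ y ∂μ := fun J hJ => by
    obtain ⟨⟨hJ, -, hJAv⟩, -⟩ := mem_maximalHeavy.mp hJ
    rw [← Av_mul_measure T φ hJ]
    exact ENNReal.mul_lt_mul_left (T.measure_pos J hJ).ne' (measure_ne_top μ J) hJAv
  have hfin : Av μ I φ * μ (⋃₀ G) ≠ ∞ :=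
    ENNReal.mul_ne_top (mem_maximalHeavy.mp hJ₀).prop.2.2.ne_top (measure_ne_top μ _)
  have key := calc
    Av μ I φ * μ I ≤ Av μ I φ * μ (⋃₀ G) := mul_le_mul_right hIG _
    _ < ∫⁻ y in ⋃₀ G, φ y ∂μ :=
        mul_measure_sUnion_lt_setLIntegral φ (countable_maximalHeavy T φ I)
          (pairwiseDisjoint_maximalHeavy T φ I) (fun _ => measurableSet_of_mem_maximalHeavy T φ I)
          hJ₀ hfin hGint
    _ ≤ ∫⁻ y in I, φ y ∂μ :=
        lintegral_mono_set (sUnion_subset fun J hJ => (mem_maximalHeavy.mp hJ).prop.2.1)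
  exact key.ne (Av_mul_measure T φ hI)

end

end MaximalHeavy

theorem mem_Sphi_iff_general (μ : Measure X) [IsProbabilityMeasure μ]
    (T : DyadicTree μ) (φ : X → ℝ≥0∞) (hgood : TGood T φ)
    (I : Set X) (hI : I ∈ T.mem) (hIX : I ≠ Set.univ) :
    I ∈ Sphi T φ ↔ ∀ J ∈ T.mem, I ⊂ J → Av μ J φ < Av μ I φ := by
  constructor
  · rintro (⟨-, hpos⟩ | hIX')
    · obtain ⟨x, hx⟩ := nonempty_of_measure_ne_zero hpos.ne'
      exact fun J hJ hIJ => Av_lt_of_mem_ASet hx hJ hIJ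
    · exact absurd hIX' hIX
  · exact fun hAv => Or.inl ⟨hI, measure_ASet_pos hAv hgood hI⟩

/-- Lemma 3.1: for `φ` a `𝒯`-good function and `I ∈ 𝒯` with `I ≠ X`, one has `I ∈ S_φ`
iff `Av_J(φ) < Av_I(φ)` for every `J ∈ 𝒯` properly containing `I`. -/
theorem mem_Sphi_iff (μ : Measure X) [IsProbabilityMeasure μ] [NullSingletonClass μ]
    (T : DyadicTree μ) (φ : X → ℝ≥0∞) (hφ : Measurable φ)
    (hint : ∫⁻ y, φ y ∂μ ≠ ∞) (hgood : TGood T φ)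
    (I : Set X) (hI : I ∈ T.mem) (hIX : I ≠ Set.univ) :
    I ∈ Sphi T φ ↔ ∀ J ∈ T.mem, I ⊂ J → Av μ J φ < Av μ I φ :=
  mem_Sphi_iff_general μ T φ hgood I hI hIX
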